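/- arXiv:1102.4810 — 7 statements merged into one kernel-verified Lean document; each statement's English description precedes it below -/
import Mathlib

section
/- For σ > 0, the function ω ↦ σ²(2 + ω²σ²)²/(4(1 + 2ω²σ²)) on (0,∞) attains its minimum at ω = 1/σ. -/
/-- Laplace noise, per-sensor power constraint: the asymptotic variance of the
location estimator, `ω ↦ σ²(2 + ω²σ²)²/(4(1 + 2ω²σ²))` on `(0,∞)`,
attains its minimum at `ω = 1/σ`. -/
theorem laplace_location_asv_min (σ : ℝ) (hσ : 0 < σ) :
    ∀ ω : ℝ, 0 < ω →
      σ^2 * (2 + (1/σ)^2 * σ^2)^2 / (4 * (1 + 2 * (1/σ)^2 * σ^2)) ≤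
        σ^2 * (2 + ω^2 * σ^2)^2 / (4 * (1 + 2 * ω^2 * σ^2)) := by
  intro ω hω
  have h1 : (1/σ)^2 * σ^2 = 1 := by field_simp
  have h2 : 2 * (1/σ)^2 * σ^2 = 2 := by rw [mul_assoc, h1]; ring
  rw [h1, h2]
  have ht : 0 ≤ ω^2 * σ^2 := by positivity
  rw [div_le_div_iff₀ (by norm_num) (by nlinarith)]
  nlinarith [sq_nonneg (ω^2 * σ^2 - 1), sq_nonneg σ, sq_nonneg (σ * (ω^2*σ^2 - 1))]
end

section
/- Let f, g : (0, B] → ℝ be differentiable quasi-convex functions, with f minimized at ω_f and g at ω_g (allowing endpoint minimizers). Then for any α, β > 0, the function h = α·f + β·g attains its minimum at some ω_h with min(ω_f, ω_g) ≤ ω_h ≤ max(ω_f, ω_g). -/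
/-!
Quasi-convexity of `f` on an interval says that `f z ≤ max (f x) (f y)` whenever `z` lies between
`x` and `y`. Applied with one endpoint at a minimizer `ω_f`, this makes `f` non-increasing left of
`ω_f` and non-decreasing right of it, and likewise for `g`. Hence `h = α f + β g` is non-increasing
left of `min ω_f ω_g` and non-decreasing right of `max ω_f ω_g`, so a minimizer of the continuous
function `h` on the compact interval between them minimizes `h` on all of `(0, B]`.
-/

open Set

/-- A univariate function on `(0, B]` is quasi-convex if it is monotone
(non-decreasing or non-increasing), or has a global minimizer `w` such that it is
non-increasing before `w` and non-decreasing after. -/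
def QuasiConvexOnIoc (B : ℝ) (f : ℝ → ℝ) : Prop :=
  MonotoneOn f (Ioc 0 B) ∨ AntitoneOn f (Ioc 0 B) ∨
    ∃ w ∈ Ioc 0 B, AntitoneOn f (Ioc 0 w) ∧ MonotoneOn f (Icc w B)

section MinOfBetweenLeMax

variable {α β : Type*} [LinearOrder α] [LinearOrder β] {s : Set α} {f : α → β} {a : α}

theorem antitoneOn_inter_Iic_of_isMinOn_of_le_max (ha : IsMinOn f s a) (has : a ∈ s)
    (hf : ∀ x ∈ s, ∀ y ∈ s, ∀ z ∈ Icc x y, f z ≤ max (f x) (f y)) :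
    AntitoneOn f (s ∩ Iic a) := fun x hx y hy hxy =>
  (hf x hx.1 a has y ⟨hxy, hy.2⟩).trans (max_eq_left (ha hx.1)).le

theorem monotoneOn_inter_Ici_of_isMinOn_of_le_max (ha : IsMinOn f s a) (has : a ∈ s)
    (hf : ∀ x ∈ s, ∀ y ∈ s, ∀ z ∈ Icc x y, f z ≤ max (f x) (f y)) :
    MonotoneOn f (s ∩ Ici a) := fun x hx y hy hxy =>
  (hf a has y hy.1 x ⟨hx.2, hxy⟩).trans (max_eq_right (ha hy.1)).le

end MinOfBetweenLeMax

section ConstMul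

variable {α M₀ : Type*} [Preorder α] [MonoidWithZero M₀] [Preorder M₀] [PosMulMono M₀]
  {f : α → M₀} {s : Set α} {a : M₀}

theorem MonotoneOn.const_mul (hf : MonotoneOn f s) (ha : 0 ≤ a) :
    MonotoneOn (fun x => a * f x) s :=
  (monotone_mul_left_of_nonneg ha).comp_monotoneOn hf

theorem AntitoneOn.const_mul (hf : AntitoneOn f s) (ha : 0 ≤ a) :
    AntitoneOn (fun x => a * f x) s :=
  (monotone_mul_left_of_nonneg ha).comp_antitoneOn hf

end ConstMul

namespace QuasiConvexOnIoc

variable {B : ℝ} {f : ℝ → ℝ}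

theorem le_max_of_mem_Icc (hf : QuasiConvexOnIoc B f)
    {x y z : ℝ} (hx : x ∈ Ioc 0 B) (hy : y ∈ Ioc 0 B) (hz : z ∈ Icc x y) :
    f z ≤ max (f x) (f y) := by
  have hzs : z ∈ Ioc 0 B := ⟨hx.1.trans_le hz.1, hz.2.trans hy.2⟩
  rcases hf with hmono | hanti | ⟨w, -, hanti, hmono⟩
  · exact le_max_of_le_right (hmono hzs hy hz.2)
  · exact le_max_of_le_left (hanti hx hzs hz.1)
  · rcases le_or_gt z w with hzw | hwz
    · exact le_max_of_le_left (hanti ⟨hx.1, hz.1.trans hzw⟩ ⟨hzs.1, hzw⟩ hz.1)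
    · exact le_max_of_le_right (hmono ⟨hwz.le, hzs.2⟩ ⟨hwz.le.trans hz.2, hy.2⟩ hz.2)

theorem antitoneOn_inter_Iic (hf : QuasiConvexOnIoc B f)
    {ω : ℝ} (hω : ω ∈ Ioc 0 B) (hmin : IsMinOn f (Ioc 0 B) ω) :
    AntitoneOn f (Ioc 0 B ∩ Iic ω) :=
  antitoneOn_inter_Iic_of_isMinOn_of_le_max hmin hω fun _ hx _ hy _ hz =>
    hf.le_max_of_mem_Icc hx hy hz

theorem monotoneOn_inter_Ici (hf : QuasiConvexOnIoc B f)
    {ω : ℝ} (hω : ω ∈ Ioc 0 B) (hmin : IsMinOn f (Ioc 0 B) ω) :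
    MonotoneOn f (Ioc 0 B ∩ Ici ω) :=
  monotoneOn_inter_Ici_of_isMinOn_of_le_max hmin hω fun _ hx _ hy _ hz =>
    hf.le_max_of_mem_Icc hx hy hz

end QuasiConvexOnIoc

theorem exists_mem_Icc_isMinOn_of_antitoneOn_of_monotoneOn {s : Set ℝ} {h : ℝ → ℝ} {m M : ℝ}
    (hmM : m ≤ M) (hm : m ∈ s) (hM : M ∈ s) (hanti : AntitoneOn h (s ∩ Iic m))
    (hmono : MonotoneOn h (s ∩ Ici M)) (hcont : ContinuousOn h (Icc m M)) :
    ∃ c ∈ Icc m M, IsMinOn h s c := by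
  obtain ⟨c, hc, hcmin⟩ := isCompact_Icc.exists_isMinOn (nonempty_Icc.mpr hmM) hcont
  refine ⟨c, hc, fun x hx => ?_⟩
  rcases lt_or_ge x m with hxm | hmx
  · exact (hcmin ⟨le_rfl, hmM⟩).trans (hanti ⟨hx, hxm.le⟩ ⟨hm, self_mem_Iic⟩ hxm.le)
  rcases lt_or_ge M x with hMx | hxM
  · exact (hcmin ⟨hmM, le_rfl⟩).trans (hmono ⟨hM, self_mem_Ici⟩ ⟨hx, hMx.le⟩ hMx.le)
  · exact hcmin ⟨hmx, hxM⟩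

theorem min_of_combination_between_general (B : ℝ) (f g : ℝ → ℝ)
    (hfd : DifferentiableOn ℝ f (Ioc 0 B)) (hgd : DifferentiableOn ℝ g (Ioc 0 B))
    (hfq : QuasiConvexOnIoc B f) (hgq : QuasiConvexOnIoc B g)
    (ωf ωg : ℝ) (hωf : ωf ∈ Ioc 0 B) (hωg : ωg ∈ Ioc 0 B)
    (hfmin : ∀ ω ∈ Ioc 0 B, f ωf ≤ f ω) (hgmin : ∀ ω ∈ Ioc 0 B, g ωg ≤ g ω)
    (α β : ℝ) (hα : 0 < α) (hβ : 0 < β) :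
    ∃ ωh ∈ Ioc 0 B, (∀ ω ∈ Ioc 0 B, α * f ωh + β * g ωh ≤ α * f ω + β * g ω) ∧
      min ωf ωg ≤ ωh ∧ ωh ≤ max ωf ωg := by
  set s := Ioc (0 : ℝ) B
  set m := min ωf ωg
  set M := max ωf ωg
  have hm : m ∈ s := ⟨lt_min hωf.1 hωg.1, min_le_of_left_le hωf.2⟩
  have hM : M ∈ s := ⟨lt_max_of_lt_left hωf.1, max_le hωf.2 hωg.2⟩
  have hsub : Icc m M ⊆ s := (Icc_subset_Ioc_iff min_le_max).mpr ⟨hm.1, hM.2⟩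
  have hfmin' : IsMinOn f s ωf := isMinOn_iff.mpr hfmin
  have hgmin' : IsMinOn g s ωg := isMinOn_iff.mpr hgmin
  have hanti : AntitoneOn (fun x => α * f x + β * g x) (s ∩ Iic m) :=
    (((hfq.antitoneOn_inter_Iic hωf hfmin').mono <| inter_subset_inter_right _ <|
        Iic_subset_Iic.mpr (min_le_left _ _)).const_mul hα.le).add
      (((hgq.antitoneOn_inter_Iic hωg hgmin').mono <| inter_subset_inter_right _ <|
        Iic_subset_Iic.mpr (min_le_right _ _)).const_mul hβ.le)
  have hmono : MonotoneOn (fun x => α * f x + β * g x) (s ∩ Ici M) :=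
    (((hfq.monotoneOn_inter_Ici hωf hfmin').mono <| inter_subset_inter_right _ <|
        Ici_subset_Ici.mpr (le_max_left _ _)).const_mul hα.le).add
      (((hgq.monotoneOn_inter_Ici hωg hgmin').mono <| inter_subset_inter_right _ <|
        Ici_subset_Ici.mpr (le_max_right _ _)).const_mul hβ.le)
  have hcont : ContinuousOn (fun x => α * f x + β * g x) (Icc m M) :=
    (continuousOn_const.mul (hfd.continuousOn.mono hsub)).add
      (continuousOn_const.mul (hgd.continuousOn.mono hsub))
  obtain ⟨ωh, hωh, hωh_min⟩ :=
    exists_mem_Icc_isMinOn_of_antitoneOn_of_monotoneOn min_le_max hm hM hanti hmono hcont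
  exact ⟨ωh, hsub hωh, isMinOn_iff.mp hωh_min, hωh⟩

/-- If `f` and `g` are differentiable quasi-convex functions on `(0, B]`, minimized at
`ω_f` and `ω_g` respectively, then for any `α, β > 0` the function `h = α·f + β·g`
attains its minimum at some `ω_h` between `ω_f` and `ω_g`. -/
theorem min_of_combination_between (B : ℝ) (hB : 0 < B) (f g : ℝ → ℝ)
    (hfd : DifferentiableOn ℝ f (Ioc 0 B)) (hgd : DifferentiableOn ℝ g (Ioc 0 B))
    (hfq : QuasiConvexOnIoc B f) (hgq : QuasiConvexOnIoc B g)
    (ωf ωg : ℝ) (hωf : ωf ∈ Ioc 0 B) (hωg : ωg ∈ Ioc 0 B)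
    (hfmin : ∀ ω ∈ Ioc 0 B, f ωf ≤ f ω) (hgmin : ∀ ω ∈ Ioc 0 B, g ωg ≤ g ω)
    (α β : ℝ) (hα : 0 < α) (hβ : 0 < β) :
    ∃ ωh ∈ Ioc 0 B, (∀ ω ∈ Ioc 0 B, α * f ωh + β * g ωh ≤ α * f ω + β * g ω) ∧
      min ωf ωg ≤ ωh ∧ ωh ≤ max ωf ωg :=
  min_of_combination_between_general B f g hfd hgd hfq hgq ωf ωg hωf hωg hfmin hgmin α β hα hβ
end

section
/- For σ > 0 and constants P, σ_ν² > 0, the function ω ↦ (P + σ_ν² − P·e^{−2ω²σ²})/(2Pω²e^{−ω²σ²}) on (0,∞) is, after the substitution β = ω²σ², minimized at the unique β > 0 solving (σ_ν²/P + 1)(β − 1)e^{2β} + (β + 1) = 0. -/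
/-!
With `c = σν²/P + 1 > 1` and `β = ω²σ²`, the asymptotic variance is `σ² · f(β)` where
`f(β) = (c e^β − e^{−β}) / (2β)` (`reducedAsv`), and `f'(β) = e^β k(β) / (2β²)` with
`k(β) = c(β − 1) + (β + 1) e^{−2β}` (`stationarityFn`), so that the paper's equation reads
`e^{2β} k(β) = 0`. Since `e^{2β} ≥ 1 + 2β`, `k' = c − (2β + 1) e^{−2β} ≥ c − 1 > 0`: `k` is
strictly increasing, and as `k 0 = 1 − c < 0 < 2 e^{−2} = k 1` it has exactly one positive zero,
where `f` changes from decreasing to increasing.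
-/

open Real Set

noncomputable section

namespace GaussianLocationAsv

def reducedAsv (c β : ℝ) : ℝ := (c * exp β - exp (-β)) / (2 * β)

def stationarityFn (c β : ℝ) : ℝ := c * (β - 1) + (β + 1) * exp (-(2 * β))

lemma add_one_mul_exp_neg_le_one (x : ℝ) : (x + 1) * exp (-x) ≤ 1 := by
  rw [← le_div_iff₀ (exp_pos _), exp_neg, div_inv_eq_mul, one_mul]
  exact add_one_le_exp x

lemma exp_two_mul_mul_stationarityFn (c β : ℝ) :
    exp (2 * β) * stationarityFn c β = c * (β - 1) * exp (2 * β) + (β + 1) := by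
  have h : exp (2 * β) * exp (-(2 * β)) = 1 := by rw [← exp_add]; simp
  unfold stationarityFn
  linear_combination (β + 1) * h

lemma hasDerivAt_stationarityFn (c x : ℝ) :
    HasDerivAt (stationarityFn c) (c - (2 * x + 1) * exp (-(2 * x))) x := by
  have h := (((hasDerivAt_id x).sub_const 1).const_mul c).add
    (((hasDerivAt_id x).add_const 1).mul ((((hasDerivAt_id x).const_mul 2).neg).exp))
  exact h.congr_deriv (by simp only [id, Pi.neg_apply]; ring)

lemma strictMono_stationarityFn {c : ℝ} (hc : 1 < c) : StrictMono (stationarityFn c) :=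
  strictMono_of_hasDerivAt_pos (hasDerivAt_stationarityFn c) fun x => by
    have := add_one_mul_exp_neg_le_one (2 * x)
    linarith

lemma exists_pos_stationarityFn_eq_zero {c : ℝ} (hc : 1 < c) :
    ∃ β, 0 < β ∧ stationarityFn c β = 0 := by
  have hcont : ContinuousOn (stationarityFn c) (Icc 0 1) :=
    fun x _ => (hasDerivAt_stationarityFn c x).continuousAt.continuousWithinAt
  have h0 : stationarityFn c 0 < 0 := by
    simp only [stationarityFn, mul_zero, neg_zero, exp_zero]; linarith
  have h1 : 0 < stationarityFn c 1 := by
    simp only [stationarityFn, sub_self, mul_zero, zero_add]; positivity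
  obtain ⟨β, hβ, hβ0⟩ := intermediate_value_Ioo zero_le_one hcont ⟨h0, h1⟩
  exact ⟨β, hβ.1, hβ0⟩

lemma hasDerivAt_reducedAsv (c : ℝ) {x : ℝ} (hx : x ≠ 0) :
    HasDerivAt (reducedAsv c) (exp x * stationarityFn c x / (2 * x ^ 2)) x := by
  have h := (((hasDerivAt_exp x).const_mul c).sub (hasDerivAt_id x).neg.exp).div
    ((hasDerivAt_id x).const_mul 2) (mul_ne_zero two_ne_zero hx)
  refine h.congr_deriv ?_
  simp only [id, Pi.neg_apply, Pi.sub_apply, stationarityFn]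
  rw [show -(2 * x) = -x + -x by ring, exp_add, exp_neg]
  field_simp
  ring

lemma isMinOn_reducedAsv {c β : ℝ} (hc : 1 < c) (hβ : 0 < β) (hk : stationarityFn c β = 0) :
    IsMinOn (reducedAsv c) (Ioi 0) β := by
  have hderiv : ∀ x, 0 < x → deriv (reducedAsv c) x = exp x * stationarityFn c x / (2 * x ^ 2) :=
    fun x hx => (hasDerivAt_reducedAsv c hx.ne').deriv
  have hdiff : ∀ s ⊆ Ioi (0 : ℝ), DifferentiableOn ℝ (reducedAsv c) s :=
    fun s hs x hx => (hasDerivAt_reducedAsv c (hs hx).ne').differentiableAt.differentiableWithinAt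
  refine isMinOn_Ioi_of_deriv (hasDerivAt_reducedAsv c hβ.ne').continuousAt
    (hdiff _ Ioo_subset_Ioi_self) (hdiff _ (Ioi_subset_Ioi hβ.le)) ?_ ?_
  · intro x hx
    rw [hderiv x hx.1]
    have : stationarityFn c x < 0 := hk ▸ strictMono_stationarityFn hc hx.2
    exact div_nonpos_of_nonpos_of_nonneg (mul_nonpos_of_nonneg_of_nonpos (exp_pos x).le this.le)
      (by positivity)
  · intro x hx
    rw [hderiv x (hβ.trans hx)]
    have : 0 < stationarityFn c x := hk ▸ strictMono_stationarityFn hc hx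
    positivity

lemma asv_eq_sq_mul_reducedAsv {P σ : ℝ} (σν2 : ℝ) (hP : P ≠ 0) (hσ : σ ≠ 0) (t : ℝ) :
    (P + σν2 - P * exp (-2 * t * σ ^ 2)) / (2 * P * t * exp (-t * σ ^ 2)) =
      σ ^ 2 * reducedAsv (σν2 / P + 1) (t * σ ^ 2) := by
  have e1 : exp (-2 * t * σ ^ 2) = (exp (t * σ ^ 2))⁻¹ ^ 2 := by
    rw [← exp_neg, ← exp_nat_mul]; ring_nf
  have e2 : exp (-t * σ ^ 2) = (exp (t * σ ^ 2))⁻¹ := by rw [← exp_neg]; ring_nf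
  unfold reducedAsv
  rw [e1, e2, exp_neg]
  field_simp
  ring

end GaussianLocationAsv

end

open GaussianLocationAsv in
/-- Gaussian noise, total power constraint: the asymptotic variance
`ω ↦ (P + σν² − P·e^{−2ω²σ²})/(2Pω²e^{−ω²σ²})` on `(0,∞)` is, after the
substitution `β = ω²σ²`, minimized at the unique `β > 0` solving
`(σν²/P + 1)(β − 1)e^{2β} + (β + 1) = 0`. -/
theorem gaussian_location_asv_min_tpc (σ P σν2 : ℝ) (hσ : 0 < σ) (hP : 0 < P)
    (hν : 0 < σν2) :
    (∃! β : ℝ, 0 < β ∧ (σν2 / P + 1) * (β - 1) * Real.exp (2 * β) + (β + 1) = 0) ∧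
    ∀ β : ℝ, 0 < β → (σν2 / P + 1) * (β - 1) * Real.exp (2 * β) + (β + 1) = 0 →
      ∀ ω : ℝ, 0 < ω →
        (P + σν2 - P * Real.exp (-2 * (Real.sqrt β / σ)^2 * σ^2)) /
            (2 * P * (Real.sqrt β / σ)^2 * Real.exp (-(Real.sqrt β / σ)^2 * σ^2)) ≤
          (P + σν2 - P * Real.exp (-2 * ω^2 * σ^2)) /
            (2 * P * ω^2 * Real.exp (-ω^2 * σ^2)) := by
  set c := σν2 / P + 1
  have hc : 1 < c := by have := div_pos hν hP; linarith
  have hroot : ∀ β, c * (β - 1) * exp (2 * β) + (β + 1) = 0 ↔ stationarityFn c β = 0 := by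
    intro β
    rw [← exp_two_mul_mul_stationarityFn, mul_eq_zero, or_iff_right (exp_ne_zero _)]
  simp only [hroot]
  refine ⟨?_, fun β hβ hk ω hω => ?_⟩
  · obtain ⟨β, hβ, hk⟩ := exists_pos_stationarityFn_eq_zero hc
    exact ⟨β, ⟨hβ, hk⟩, fun b hb => (strictMono_stationarityFn hc).injective (hb.2.trans hk.symm)⟩
  have hβσ : (√β / σ) ^ 2 * σ ^ 2 = β := by
    rw [div_pow, sq_sqrt hβ.le]; field_simp
  rw [asv_eq_sq_mul_reducedAsv σν2 hP.ne' hσ.ne',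
    asv_eq_sq_mul_reducedAsv σν2 hP.ne' hσ.ne', hβσ]
  exact mul_le_mul_of_nonneg_left
    (isMinOn_reducedAsv hc hβ hk (by positivity : (0 : ℝ) < ω ^ 2 * σ ^ 2)) (sq_nonneg σ)
end

section
/- For σ > 0, the function f(ω) = (1 − e^{−2ωσ})/(2ω²e^{−2ωσ}) on (0,∞) attains its minimum at ω* = (2 + W(−2e^{−2}))/(2σ), where W is the principal branch of the Lambert W function. -/
/-!
Substituting `t = 2ωσ` turns the variance into `2σ² · (eᵗ - 1)/t²`, whose derivative has the
sign of `p(t) = eᵗ(t - 2) + 2`. Since `p'' = t eᵗ ≥ 0`, `p` is convex on `[0, ∞)`; it vanishes at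
`0` and at `a = 2 + W(-2e⁻²)` (the defining equation of `W` is exactly `p(a) = 0`), so it is `≤ 0`
on `[0, a]` and `≥ 0` beyond `a`. Hence `(eᵗ - 1)/t²` decreases up to `a` and increases after it.
-/

open Real Set

lemma convexOn_exp_mul_sub_two : ConvexOn ℝ (Ici 0) (fun t ↦ exp t * (t - 2)) := by
  refine convexOn_of_hasDerivWithinAt2_nonneg (convex_Ici 0) (f' := fun t ↦ exp t * (t - 1))
    (f'' := fun t ↦ exp t * t) (by fun_prop) (fun t _ ↦ ?_) (fun t _ ↦ ?_) (fun t ht ↦ ?_)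
  · exact (((hasDerivAt_exp t).mul ((hasDerivAt_id t).sub_const 2)).congr_deriv
      (by simp only [id_eq]; ring)).hasDerivWithinAt
  · exact (((hasDerivAt_exp t).mul ((hasDerivAt_id t).sub_const 1)).congr_deriv
      (by simp only [id_eq]; ring)).hasDerivWithinAt
  · rw [interior_Ici] at ht
    exact mul_nonneg (exp_pos t).le ht.le

section

variable {a t : ℝ}

lemma exp_mul_sub_two_le_of_le (ha : exp a * (a - 2) = -2) (ht : 0 ≤ t) (hta : t ≤ a) :
    exp t * (t - 2) ≤ -2 := by
  have h := convexOn_exp_mul_sub_two.le_on_segment (mem_Ici.2 le_rfl) (mem_Ici.2 (ht.trans hta))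
    (by rw [segment_eq_Icc (ht.trans hta)]; exact ⟨ht, hta⟩)
  simpa [ha] using h

lemma le_exp_mul_sub_two_of_le (ha0 : 0 < a) (ha : exp a * (a - 2) = -2) (hat : a ≤ t) :
    -2 ≤ exp t * (t - 2) := by
  have h := convexOn_exp_mul_sub_two.le_right_of_left_le'' (mem_Ici.2 le_rfl)
    (mem_Ici.2 (ha0.le.trans hat)) ha0 hat (by simp [ha])
  simpa [ha] using h

lemma hasDerivAt_exp_sub_one_div_sq (ht : t ≠ 0) :
    HasDerivAt (fun t ↦ (exp t - 1) / t ^ 2) ((exp t * (t - 2) + 2) / t ^ 3) t := by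
  refine (((hasDerivAt_exp t).sub_const 1).div (hasDerivAt_pow 2 t)
    (pow_ne_zero 2 ht)).congr_deriv ?_
  field_simp
  ring

lemma isMinOn_exp_sub_one_div_sq (ha0 : 0 < a) (ha : exp a * (a - 2) = -2) :
    IsMinOn (fun t ↦ (exp t - 1) / t ^ 2) (Ioi 0) a := by
  have hderiv : ∀ t, 0 < t → HasDerivAt (fun t ↦ (exp t - 1) / t ^ 2)
      ((exp t * (t - 2) + 2) / t ^ 3) t := fun t ht ↦ hasDerivAt_exp_sub_one_div_sq ht.ne'
  refine isMinOn_Ioi_of_deriv (hderiv a ha0).continuousAt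
    (fun t ht ↦ (hderiv t ht.1).differentiableAt.differentiableWithinAt)
    (fun t ht ↦ (hderiv t (ha0.trans ht)).differentiableAt.differentiableWithinAt)
    (fun t ht ↦ ?_) (fun t ht ↦ ?_)
  · rw [(hderiv t ht.1).deriv]
    exact div_nonpos_of_nonpos_of_nonneg
      (by linarith [exp_mul_sub_two_le_of_le ha ht.1.le ht.2.le]) (pow_pos ht.1 3).le
  · have ht0 : 0 < t := ha0.trans ht
    rw [(hderiv t ht0).deriv]
    exact div_nonneg (by linarith [le_exp_mul_sub_two_of_le ha0 ha ht.le])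
      (pow_pos ht0 3).le

end

lemma one_sub_exp_neg_div_mul_exp_neg (x c : ℝ) :
    (1 - exp (-x)) / (c * exp (-x)) = (exp x - 1) / c := by
  rw [exp_neg]
  field_simp

lemma cauchy_asv_eq_mul (σ ω : ℝ) (hσ : σ ≠ 0) :
    (1 - exp (-2 * ω * σ)) / (2 * ω ^ 2 * exp (-2 * ω * σ)) =
      2 * σ ^ 2 * ((exp (2 * ω * σ) - 1) / (2 * ω * σ) ^ 2) := by
  rw [show -2 * ω * σ = -(2 * ω * σ) by ring, one_sub_exp_neg_div_mul_exp_neg]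
  field_simp

/-- Cauchy noise, per-sensor power constraint: the asymptotic variance
`f(ω) = (1 − e^{−2ωσ})/(2ω²e^{−2ωσ})` on `(0,∞)` attains its minimum at
`ω* = (2 + W(−2e^{−2}))/(2σ)`, where `W` is the principal branch of the Lambert W
function, characterized by `W(x)·e^{W(x)} = x` with `W(x) ≥ −1`. -/
theorem cauchy_asv_min_pspc (σ : ℝ) (hσ : 0 < σ) (w : ℝ)
    (hw : w * Real.exp w = -2 * Real.exp (-2)) (hw1 : -1 ≤ w) :
    ∀ ω : ℝ, 0 < ω →
      (1 - Real.exp (-2 * ((2 + w) / (2 * σ)) * σ)) /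
          (2 * ((2 + w) / (2 * σ))^2 * Real.exp (-2 * ((2 + w) / (2 * σ)) * σ)) ≤
        (1 - Real.exp (-2 * ω * σ)) / (2 * ω^2 * Real.exp (-2 * ω * σ)) := by
  intro ω hω
  have ha0 : 0 < 2 + w := by linarith
  have ha : exp (2 + w) * (2 + w - 2) = -2 := by
    have h22 : exp 2 * exp (-2) = 1 := by rw [← exp_add]; norm_num
    rw [exp_add, add_sub_cancel_left]
    linear_combination exp 2 * hw - 2 * h22
  have hωa : 2 * ((2 + w) / (2 * σ)) * σ = 2 + w := by field_simp
  rw [cauchy_asv_eq_mul σ _ hσ.ne', cauchy_asv_eq_mul σ ω hσ.ne', hωa]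
  exact mul_le_mul_of_nonneg_left
    (isMinOn_exp_sub_one_div_sq ha0 ha (mem_Ioi.2 (by positivity))) (by positivity)
end

section
/- For P, σ_ν² > 0 and σ > 0, the function f(ω) = (P + σ_ν² − P·e^{−2ωσ})/(2Pω²e^{−2ωσ}) on (0,∞) attains its minimum at ω* = (2 + W(−2P/(e²(P + σ_ν²))))/(2σ), where W is the principal branch of the Lambert W function. -/
/-!
Put `A = P + σν²` and `t = 2ωσ`. Then `f(ω) = (2σ²/P) · (A eᵗ - P)/t²`, and the defining
equation of `w` says exactly that `c = 2 + w` is a critical point of `ψ(t) = (A eᵗ - P)/t²`,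
i.e. `A e^c (2 - c) = 2P`. At such a point `ψ(c) = A e^c/(2c)`, and `ψ(c) ≤ ψ(t)` becomes,
with `s = t - c`, the inequality `1 + s + s²/(2c) ≤ eˢ` for `s ≥ -c`. The difference of the
two sides is convex to the right of `-log c`, where it has a double zero at `0`, and concave to
the left of it; on the concave part it is bounded below by its values at the endpoints `-c`
and `-log c`, and the value at `-c` is nonnegative because `(2 - c) e^c = 2P/A ≤ 2`.
-/

open Real Set

lemma ConvexOn.isMinOn_of_hasDerivAt_eq_zero {S : Set ℝ} {f : ℝ → ℝ} {x : ℝ}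
    (hf : ConvexOn ℝ S f) (hx : x ∈ S) (hf' : HasDerivAt f 0 x) : IsMinOn f S x := by
  intro y hy
  rcases lt_trichotomy x y with hxy | rfl | hyx
  · exact (slope_nonneg_iff_of_le hxy.le).1 (hf.le_slope_of_hasDerivAt hx hy hxy hf')
  · exact le_refl (f x)
  · exact (slope_nonpos_iff_of_le hyx.le).1 (hf.slope_le_of_hasDerivAt hy hx hyx hf')

noncomputable def expQuadGap (c s : ℝ) : ℝ := 2 * c * (exp s - 1 - s) - s ^ 2

lemma hasDerivAt_expQuadGap (c s : ℝ) :
    HasDerivAt (expQuadGap c) (2 * c * (exp s - 1) - 2 * s) s :=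
  ((((hasDerivAt_exp s).sub_const 1).fun_sub (hasDerivAt_id' s)).const_mul (2 * c)).fun_sub
    (hasDerivAt_pow 2 s) |>.congr_deriv (by norm_num)

lemma hasDerivAt_deriv_expQuadGap (c s : ℝ) :
    HasDerivAt (fun s ↦ 2 * c * (exp s - 1) - 2 * s) (2 * c * exp s - 2) s :=
  (((hasDerivAt_exp s).sub_const 1).const_mul (2 * c)).fun_sub ((hasDerivAt_id' s).const_mul 2)
    |>.congr_deriv (by ring)

lemma continuous_expQuadGap (c : ℝ) : Continuous (expQuadGap c) :=
  continuous_iff_continuousAt.2 fun s ↦ (hasDerivAt_expQuadGap c s).continuousAt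

lemma one_le_mul_exp_iff {c s : ℝ} (hc : 0 < c) : 1 ≤ c * exp s ↔ -log c ≤ s := by
  rw [← exp_le_exp (x := -log c), exp_neg, exp_log hc, inv_le_iff_one_le_mul₀' hc]

lemma convexOn_expQuadGap {c : ℝ} (hc : 0 < c) :
    ConvexOn ℝ (Ici (-log c)) (expQuadGap c) := by
  refine convexOn_of_hasDerivWithinAt2_nonneg (convex_Ici _)
    (continuous_expQuadGap c).continuousOn
    (fun s _ ↦ (hasDerivAt_expQuadGap c s).hasDerivWithinAt)
    (fun s _ ↦ (hasDerivAt_deriv_expQuadGap c s).hasDerivWithinAt) fun s hs ↦ ?_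
  rw [interior_Ici] at hs
  linarith [(one_le_mul_exp_iff hc).2 (le_of_lt hs)]

lemma concaveOn_expQuadGap {c : ℝ} (hc : 0 < c) :
    ConcaveOn ℝ (Iic (-log c)) (expQuadGap c) := by
  refine concaveOn_of_hasDerivWithinAt2_nonpos (convex_Iic _)
    (continuous_expQuadGap c).continuousOn
    (fun s _ ↦ (hasDerivAt_expQuadGap c s).hasDerivWithinAt)
    (fun s _ ↦ (hasDerivAt_deriv_expQuadGap c s).hasDerivWithinAt) fun s hs ↦ ?_
  rw [interior_Iic] at hs
  linarith [not_le.1 ((one_le_mul_exp_iff hc).not.2 hs.not_ge)]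

lemma expQuadGap_nonneg_of_neg_log_le {c s : ℝ} (hc : 1 ≤ c) (hs : -log c ≤ s) :
    0 ≤ expQuadGap c s := by
  have hmin := (convexOn_expQuadGap (c := c) (by linarith)).isMinOn_of_hasDerivAt_eq_zero
    (show (0 : ℝ) ∈ Ici (-log c) by simpa using log_nonneg hc)
    (by simpa using hasDerivAt_expQuadGap c 0)
  simpa [expQuadGap] using hmin hs

lemma expQuadGap_nonneg {c s : ℝ} (hc : 1 ≤ c) (hc' : 2 - c ≤ 2 * exp (-c)) (hs : -c ≤ s) :
    0 ≤ expQuadGap c s := by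
  rcases le_or_gt (-log c) s with hs' | hs'
  · exact expQuadGap_nonneg_of_neg_log_le hc hs'
  have hlog : log c < c := (log_le_sub_one_of_pos (by linarith)).trans_lt (by linarith)
  have hleft : 0 ≤ expQuadGap c (-c) := by
    have : expQuadGap c (-c) = c * (2 * exp (-c) - (2 - c)) := by
      simp only [expQuadGap]; ring
    rw [this]; exact mul_nonneg (by linarith) (by linarith)
  have hright := expQuadGap_nonneg_of_neg_log_le hc (le_refl (-log c))
  exact (le_min hleft hright).trans <| (concaveOn_expQuadGap (by linarith)).min_le_of_mem_Icc
    (by simp [hlog.le]) (by simp) ⟨hs, hs'.le⟩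

lemma div_sq_le_div_sq_of_critical {A P c t : ℝ} (hA : 0 < A) (hc : 1 ≤ c)
    (hcrit : A * exp c * (2 - c) = 2 * P) (hPA : P ≤ A) (ht : 0 < t) :
    (A * exp c - P) / c ^ 2 ≤ (A * exp t - P) / t ^ 2 := by
  have hc' : 2 - c ≤ 2 * exp (-c) := by
    rw [exp_neg, le_mul_inv_iff₀ (exp_pos c)]
    nlinarith
  have hgap := expQuadGap_nonneg hc hc' (s := t - c) (by linarith)
  have key : (A * exp t - P) * c ^ 2 - (A * exp c - P) * t ^ 2 =
      A * c * exp c / 2 * expQuadGap c (t - c) := by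
    rw [expQuadGap, exp_sub]
    field_simp
    linear_combination (c ^ 2 - t ^ 2) * hcrit
  rw [div_le_div_iff₀ (by positivity) (by positivity)]
  linarith [mul_nonneg (by positivity : 0 ≤ A * c * exp c / 2) hgap]

lemma sub_mul_exp_neg_div_eq {A P σ ω : ℝ} (hP : P ≠ 0) (hσ : σ ≠ 0) (hω : ω ≠ 0) :
    (A - P * exp (-2 * ω * σ)) / (2 * P * ω ^ 2 * exp (-2 * ω * σ)) =
      2 * σ ^ 2 / P * ((A * exp (2 * ω * σ) - P) / (2 * ω * σ) ^ 2) := by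
  rw [show -2 * ω * σ = -(2 * ω * σ) by ring, exp_neg]
  field_simp

/-- Cauchy noise, total power constraint: the asymptotic variance
`f(ω) = (P + σν² − P·e^{−2ωσ})/(2Pω²e^{−2ωσ})` on `(0,∞)` attains its minimum at
`ω* = (2 + W(−2P/(e²(P + σν²))))/(2σ)`, where `W` is the principal branch of the
Lambert W function, characterized by `W(x)·e^{W(x)} = x` with `W(x) ≥ −1`. -/
theorem cauchy_asv_min_tpc (σ P σν2 : ℝ) (hσ : 0 < σ) (hP : 0 < P) (hν : 0 < σν2)
    (w : ℝ) (hw : w * Real.exp w = -2 * P / (Real.exp 2 * (P + σν2))) (hw1 : -1 ≤ w) :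
    ∀ ω : ℝ, 0 < ω →
      (P + σν2 - P * Real.exp (-2 * ((2 + w) / (2 * σ)) * σ)) /
          (2 * P * ((2 + w) / (2 * σ))^2 * Real.exp (-2 * ((2 + w) / (2 * σ)) * σ)) ≤
        (P + σν2 - P * Real.exp (-2 * ω * σ)) /
          (2 * P * ω^2 * Real.exp (-2 * ω * σ)) := by
  intro ω hω
  have hcrit : (P + σν2) * exp (2 + w) * (2 - (2 + w)) = 2 * P := by
    rw [eq_div_iff (by positivity)] at hw
    rw [exp_add]
    linear_combination -hw
  have hc : 2 * ((2 + w) / (2 * σ)) * σ = 2 + w := by field_simp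
  rw [sub_mul_exp_neg_div_eq hP.ne' hσ.ne' (div_pos (by linarith) (by positivity)).ne',
    sub_mul_exp_neg_div_eq hP.ne' hσ.ne' hω.ne', hc]
  exact mul_le_mul_of_nonneg_left
    (div_sq_le_div_sq_of_critical (by positivity) (by linarith) hcrit (by linarith) (by positivity))
    (by positivity)
end

section
/- For σ > 0, the function ω ↦ (1 − e^{−2ω²σ²})/(2ω²e^{−ω²σ²}) on (0,∞) is strictly increasing, and its infimum as ω → 0⁺ equals σ². -/
/-! The substitution `x = ω²σ²` turns the asymptotic variance into `σ² · sinh x / x`, using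
`(1 - e^{-2x}) / (2e^{-x}) = sinh x`. Since `sinh` is strictly convex on `[0, ∞)` and vanishes
at `0`, its secant slope `sinh x / x` is strictly increasing, and it tends to `sinh' 0 = 1`. -/

open Filter Set Topology

namespace Real

lemma strictConvexOn_sinh : StrictConvexOn ℝ (Ici 0) sinh :=
  StrictMonoOn.strictConvexOn_of_deriv (convex_Ici 0) continuous_sinh.continuousOn <| by
    rw [deriv_sinh]
    exact cosh_strictMonoOn.mono interior_subset

lemma strictMonoOn_sinh_div_self : StrictMonoOn (fun x => sinh x / x) (Ioi 0) := by
  intro x hx y hy hxy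
  simpa using strictConvexOn_sinh.secant_strict_mono self_mem_Ici (Ioi_subset_Ici_self hx)
    (Ioi_subset_Ici_self hy) (ne_of_gt hx) (ne_of_gt hy) hxy

lemma tendsto_sinh_div_self : Tendsto (fun x => sinh x / x) (𝓝[≠] 0) (𝓝 1) := by
  simpa [div_eq_inv_mul] using (hasDerivAt_sinh 0).tendsto_slope_zero

lemma one_sub_exp_neg_two_mul_div (x : ℝ) : (1 - exp (-2 * x)) / (2 * exp (-x)) = sinh x := by
  have hexp : exp (-2 * x) = exp (-x) * exp (-x) := by rw [← exp_add]; ring_nf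
  have hinv : exp x * exp (-x) = 1 := by rw [← exp_add, add_neg_cancel, exp_zero]
  rw [sinh_eq, hexp]
  field_simp
  linear_combination -hinv

end Real

open Real in
lemma gaussian_asv_eq_mul_sinh_div (σ ω : ℝ) :
    (1 - exp (-2 * ω^2 * σ^2)) / (2 * ω^2 * exp (-ω^2 * σ^2))
      = σ^2 * (sinh (ω^2 * σ^2) / (ω^2 * σ^2)) := by
  rcases eq_or_ne σ 0 with rfl | hσ
  · simp
  rw [← one_sub_exp_neg_two_mul_div]
  field_simp

/-- Gaussian noise, per-sensor power constraint: the asymptotic variance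
`ω ↦ (1 − e^{−2ω²σ²})/(2ω²e^{−ω²σ²})` is strictly increasing on `(0,∞)` and its
infimum as `ω → 0⁺` equals `σ²`. -/
theorem gaussian_location_asv_monotone (σ : ℝ) (hσ : 0 < σ) :
    StrictMonoOn (fun ω : ℝ =>
        (1 - Real.exp (-2 * ω^2 * σ^2)) / (2 * ω^2 * Real.exp (-ω^2 * σ^2)))
      (Set.Ioi 0) ∧
    Tendsto (fun ω : ℝ =>
        (1 - Real.exp (-2 * ω^2 * σ^2)) / (2 * ω^2 * Real.exp (-ω^2 * σ^2)))
      (nhdsWithin 0 (Set.Ioi 0)) (nhds (σ^2)) := by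
  simp only [gaussian_asv_eq_mul_sinh_div]
  have hσ2 : 0 < σ^2 := by positivity
  constructor
  · intro a (ha : 0 < a) b (hb : 0 < b) hab
    have hab2 : a^2 * σ^2 < b^2 * σ^2 := by gcongr
    exact mul_lt_mul_of_pos_left (Real.strictMonoOn_sinh_div_self
      (mem_Ioi.2 (by positivity)) (mem_Ioi.2 (by positivity)) hab2) hσ2
  · have hscale : Tendsto (fun ω : ℝ => ω^2 * σ^2) (𝓝[>] 0) (𝓝[≠] 0) := by
      refine tendsto_nhdsWithin_of_tendsto_nhds_of_eventually_within _ ?_ ?_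
      · exact ((by fun_prop : Continuous fun ω : ℝ => ω^2 * σ^2).tendsto' 0 0 (by simp)).mono_left
          nhdsWithin_le_nhds
      · filter_upwards [self_mem_nhdsWithin] with ω (hω : 0 < ω)
        exact (by positivity : ω^2 * σ^2 ≠ 0)
    simpa using (Real.tendsto_sinh_div_self.comp hscale).const_mul (σ^2)
end

section
/- For σ > 0, the minimum over ω > 0 of σ²(2 + ω²σ²)²/(4(1 + 2ω²σ²)) equals (3/4)σ², hence the asymptotic relative efficiency [I_θ · min_ω AsV_θ̂(ω)]⁻¹ for Laplace noise equals (2/σ² · (3/4)σ²)⁻¹ = 2/3. -/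
open Set

/-- Laplace noise: the minimum over `ω > 0` of
`σ²(2 + ω²σ²)²/(4(1 + 2ω²σ²))` equals `(3/4)σ²`, hence the asymptotic relative
efficiency `[I_θ · min_ω AsV_θ̂(ω)]⁻¹` with `I_θ = 2/σ²` equals `2/3`. -/
theorem laplace_location_are (σ : ℝ) (hσ : 0 < σ) :
    IsLeast ((fun ω : ℝ => σ^2 * (2 + ω^2 * σ^2)^2 / (4 * (1 + 2 * ω^2 * σ^2))) ''
        Set.Ioi 0) ((3/4) * σ^2) ∧
    ((2 / σ^2) * ((3/4) * σ^2))⁻¹ = 2/3 := by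
  have hσ2 : (0:ℝ) < σ^2 := by positivity
  constructor
  · constructor
    · refine ⟨1/σ, by simpa using one_div_pos.mpr hσ, ?_⟩
      have hσ' := hσ.ne'
      field_simp
      ring
    · rintro y ⟨ω, hω, rfl⟩
      simp only
      rw [le_div_iff₀ (by positivity)]
      nlinarith [sq_nonneg (ω^2 * σ^2 - 1), sq_nonneg ω, sq_nonneg (ω*σ)]
  · field_simp
    ring
end
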